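/- arXiv:1007.4779 — 5 statements merged into one kernel-verified Lean document; each statement's English description precedes it below -/
import Mathlib

section
/- Let q, t > 1 be real numbers and k ≥ 1 an integer. For all partitions λ, ν of k, the auxiliary variables Markov kernel satisfies detailed balance with respect to π_{q,t}: π_{q,t}(λ)·M(λ,ν) = π_{q,t}(ν)·M(ν,λ). Consequently π_{q,t} is a stationary distribution: Σ_{λ⊢k} π_{q,t}(λ)·M(λ,ν) = π_{q,t}(ν) for every partition ν of k. -/
open Finset

/-- `z_λ = ∏_i i^{a_i(λ)} a_i(λ)!` for a multiset of parts. -/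
def zWeight (m : Multiset ℕ) : ℕ :=
  ∏ i ∈ m.toFinset, i ^ m.count i * (m.count i).factorial

/-- `(x,y)_k = ∏_{i=0}^{k-1} (1 - x y^i)`. -/
noncomputable def poch (x y : ℝ) (k : ℕ) : ℝ :=
  ∏ i ∈ Finset.range k, (1 - x * y ^ i)

/-- The measure `π_{q,t}` on partitions of `k`. -/
noncomputable def piQT (q t : ℝ) (k : ℕ) (l : Nat.Partition k) : ℝ :=
  (poch q q k / poch t q k) * ((zWeight l.parts : ℝ))⁻¹ *
    (l.parts.map (fun p => (1 - t ^ p) / (1 - q ^ p))).prod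

/-- `π_{∞,t}` evaluated on a multiset of parts. -/
noncomputable def piInf (t : ℝ) (m : Multiset ℕ) : ℝ :=
  (t / (t - 1)) * ((zWeight m : ℝ))⁻¹ * (m.map (fun p => 1 - t⁻¹ ^ p)).prod

/-- The weight `w_λ(κ)` of choosing the sub-multiset `κ` of kept parts. -/
noncomputable def wKeep (q : ℝ) (k : ℕ) (l κ : Multiset ℕ) : ℝ :=
  (q ^ k - 1)⁻¹ * ∏ i ∈ Finset.Icc 1 k,
    (Nat.choose (l.count i) (κ.count i) : ℝ) * (q ^ i - 1) ^ (l.count i - κ.count i)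

/-- The auxiliary variables Markov kernel on partitions of `k`. -/
noncomputable def auxM (q t : ℝ) (k : ℕ) (l ν : Nat.Partition k) : ℝ :=
  ∑ κ ∈ l.parts.powerset.toFinset.filter (fun κ => κ ≤ ν.parts ∧ κ ≠ l.parts),
    wKeep q k l.parts κ * piInf t (ν.parts - κ)

/-!
Write `w_f(μ) = z_μ⁻¹ ∏_j f(μ_j)` (`cycleWeight`). For `κ ≤ λ` one has
`z_λ = C(λ, κ) z_κ z_{λ∖κ}`, where `C(λ, κ) = ∏_i C(a_i(λ), a_i(κ))` is the multiplicity of `κ`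
in the multiset powerset of `λ`. This gives `π_{q,t}(λ) w_λ(κ) = G(κ) π_{∞,t}(λ∖κ)` with `G`
(`balanceWeight`) depending on `κ` alone, so
`π_{q,t}(λ) M(λ,ν) = Σ_κ G(κ) π_{∞,t}(λ∖κ) π_{∞,t}(ν∖κ)` is symmetric in `λ` and `ν`.

Stationarity then follows from detailed balance once the rows of `M` sum to `1`. Summing
`C(λ, κ) ∏_{p ∈ λ∖κ} (q^p - 1)` over all `κ ≤ λ` gives `∏_{p ∈ λ} q^p = q^k` by the binomial
theorem, so the proper `κ` carry total weight `(q^k - 1) / (q^k - 1)`. And `π_{∞,t}` is a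
probability measure on the partitions of every `n ≥ 1`: with `A_n = Σ_{μ ⊢ n} w_f(μ)`, counting
the parts of each `μ` gives `n A_n = Σ_j f(j) A_{n-j}`, which for `f(j) = 1 - u^j` forces
`A_n = 1 - u`.
-/

namespace Multiset

variable {α : Type*} [DecidableEq α]

theorem count_powerset_eq_prod_choose (m κ : Multiset α) {s : Finset α}
    (hs : κ.toFinset ⊆ s) :
    m.powerset.count κ = ∏ i ∈ s, (m.count i).choose (κ.count i) := by
  induction m using Multiset.induction_on generalizing κ with
  | empty =>
    rcases eq_or_ne κ 0 with rfl | hκ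
    · simp
    obtain ⟨a, ha⟩ := exists_mem_of_ne_zero hκ
    rw [powerset_zero, count_singleton, if_neg hκ]
    refine (Finset.prod_eq_zero (hs (mem_toFinset.2 ha)) ?_).symm
    exact Nat.choose_eq_zero_of_lt (count_pos.2 ha)
  | cons a m ih =>
    rw [powerset_cons, count_add]
    by_cases ha : a ∈ κ
    · obtain ⟨κ', rfl⟩ := exists_cons_of_mem ha
      have has : a ∈ s := hs (by simp)
      have hs' : κ'.toFinset ⊆ s := fun i hi => hs (by simp_all)
      have hcons_right (μ ρ : Multiset α) :
          ∏ i ∈ s.erase a, (μ.count i).choose ((a ::ₘ ρ).count i) =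
            ∏ i ∈ s.erase a, (μ.count i).choose (ρ.count i) :=
        Finset.prod_congr rfl fun i hi => by rw [count_cons_of_ne (Finset.ne_of_mem_erase hi)]
      have hcons_left (ρ : Multiset α) :
          ∏ i ∈ s.erase a, ((a ::ₘ m).count i).choose (ρ.count i) =
            ∏ i ∈ s.erase a, (m.count i).choose (ρ.count i) :=
        Finset.prod_congr rfl fun i hi => by rw [count_cons_of_ne (Finset.ne_of_mem_erase hi)]
      -- Pascal's rule in the coordinate `a`; the other coordinates do not change.
      rw [count_map_eq_count' _ _ fun _ _ h => (cons_inj_right a).1 h, ih _ hs, ih _ hs',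
        ← Finset.mul_prod_erase s _ has, ← Finset.mul_prod_erase s _ has,
        ← Finset.mul_prod_erase s _ has, hcons_left, hcons_right, count_cons_self,
        count_cons_self, Nat.choose_succ_succ, add_mul, add_comm]
    · have hmap : (m.powerset.map (cons a)).count κ = 0 :=
        count_eq_zero.2 fun h => by
          obtain ⟨κ', -, rfl⟩ := mem_map.1 h
          exact ha (mem_cons_self a κ')
      rw [hmap, add_zero, ih _ hs]
      refine Finset.prod_congr rfl fun i _ => ?_
      rcases eq_or_ne i a with rfl | hia
      · simp [count_eq_zero.2 ha]
      · rw [count_cons_of_ne hia]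

theorem sum_map_prod_map_sub_powerset {R : Type*} [CommSemiring R] (m : Multiset α)
    (g : α → R) :
    (m.powerset.map fun κ => ((m - κ).map g).prod).sum = (m.map fun a => g a + 1).prod := by
  simp [prod_map_add, antidiagonal_eq_map_powerset, map_map]

theorem prod_map_eq_prod_pow_count {M : Type*} [CommMonoid M] (m : Multiset α) (f : α → M)
    {s : Finset α} (hs : m.toFinset ⊆ s) :
    (m.map f).prod = ∏ i ∈ s, f i ^ m.count i := by
  rw [Finset.prod_multiset_map_count]
  exact Finset.prod_subset hs fun i _ hi => by
    rw [count_eq_zero_of_notMem (by simpa using hi), pow_zero]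

theorem prod_map_pow_eq_pow_sum {M : Type*} [CommMonoid M] (c : M) (m : Multiset ℕ) :
    (m.map (c ^ ·)).prod = c ^ m.sum := by
  induction m using Multiset.induction_on with
  | empty => simp
  | cons a m ih => simp [pow_add, ih]

end Multiset

theorem zWeight_eq_prod_of_subset {m : Multiset ℕ} {s : Finset ℕ} (hs : m.toFinset ⊆ s) :
    zWeight m = ∏ i ∈ s, i ^ m.count i * (m.count i).factorial :=
  Finset.prod_subset hs fun i _ hi => by
    rw [Multiset.count_eq_zero_of_notMem (by simpa using hi)]
    simp

theorem zWeight_eq_count_powerset_mul {m κ : Multiset ℕ} (h : κ ≤ m) :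
    zWeight m = m.powerset.count κ * zWeight κ * zWeight (m - κ) := by
  have hκ : κ.toFinset ⊆ m.toFinset := Multiset.toFinset_subset.2 (Multiset.subset_of_le h)
  have hd : (m - κ).toFinset ⊆ m.toFinset :=
    Multiset.toFinset_subset.2 (Multiset.subset_of_le tsub_le_self)
  rw [Multiset.count_powerset_eq_prod_choose m κ hκ, zWeight_eq_prod_of_subset hκ,
    zWeight_eq_prod_of_subset hd, zWeight, ← Finset.prod_mul_distrib, ← Finset.prod_mul_distrib]
  refine Finset.prod_congr rfl fun i _ => ?_
  obtain ⟨d, hd⟩ := Nat.exists_eq_add_of_le (Multiset.le_iff_count.1 h i)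
  rw [Multiset.count_sub, hd, Nat.add_sub_cancel_left,
    ← Nat.add_choose_mul_factorial_mul_factorial, Nat.choose_symm_add, pow_add]
  ring

noncomputable def cycleWeight (f : ℕ → ℝ) (m : Multiset ℕ) : ℝ :=
  (zWeight m : ℝ)⁻¹ * (m.map f).prod

theorem count_powerset_mul_cycleWeight {m κ : Multiset ℕ} (h : κ ≤ m) (f : ℕ → ℝ) :
    m.powerset.count κ * cycleWeight f m = cycleWeight f κ * cycleWeight f (m - κ) := by
  have hpos : 0 < m.powerset.count κ := Multiset.count_pos.2 (Multiset.mem_powerset.2 h)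
  have hprod : (m.map f).prod = (κ.map f).prod * ((m - κ).map f).prod := by
    rw [← Multiset.prod_add, ← Multiset.map_add, add_tsub_cancel_of_le h]
  rw [cycleWeight, cycleWeight, cycleWeight, zWeight_eq_count_powerset_mul h, hprod]
  push_cast
  field_simp

theorem cycleWeight_mul_prod (f g : ℕ → ℝ) (m : Multiset ℕ) :
    cycleWeight f m * (m.map g).prod = cycleWeight (fun p => f p * g p) m := by
  rw [cycleWeight, cycleWeight, Multiset.prod_map_mul, mul_assoc]

theorem cycleWeight_pow_mul (c : ℝ) (f : ℕ → ℝ) (m : Multiset ℕ) :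
    cycleWeight (fun p => c ^ p * f p) m = c ^ m.sum * cycleWeight f m := by
  rw [cycleWeight, cycleWeight, Multiset.prod_map_mul, Multiset.prod_map_pow_eq_pow_sum]
  ring

theorem cycleWeight_zero (f : ℕ → ℝ) : cycleWeight f 0 = 1 := by
  simp [cycleWeight, zWeight]

theorem cycleWeight_singleton (f : ℕ → ℝ) (j : ℕ) : cycleWeight f {j} = (j : ℝ)⁻¹ * f j := by
  simp [cycleWeight, zWeight]

namespace Nat.Partition

variable {n : ℕ}

theorem zero_notMem_parts (p : n.Partition) : 0 ∉ p.parts := fun h => (p.parts_pos h).ne rfl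

theorem toFinset_parts_subset_Icc (p : n.Partition) : p.parts.toFinset ⊆ Finset.Icc 1 n :=
  fun _ hi => Finset.mem_Icc.2
    ⟨p.parts_pos (Multiset.mem_toFinset.1 hi), p.le_of_mem_parts (Multiset.mem_toFinset.1 hi)⟩

theorem sum_Icc_count_mul (p : n.Partition) : ∑ i ∈ Finset.Icc 1 n, p.parts.count i * i = n := by
  conv_rhs => rw [← p.parts_sum, Finset.sum_multiset_count]
  refine (Finset.sum_subset p.toFinset_parts_subset_Icc fun i _ hi => ?_).symm
  rw [Multiset.count_eq_zero_of_notMem (by simpa using hi), zero_mul]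

theorem sum_parts_sub_add {κ : Multiset ℕ} (p : n.Partition) (h : κ ≤ p.parts) :
    (p.parts - κ).sum + κ.sum = n := by
  rw [← Multiset.sum_add, tsub_add_cancel_of_le h, p.parts_sum]

theorem sum_lt_of_lt_parts {κ : Multiset ℕ} (p : n.Partition) (h : κ < p.parts) : κ.sum < n := by
  obtain ⟨x, hx⟩ := Multiset.exists_mem_of_ne_zero (tsub_pos_of_lt h).ne'
  have hpos := p.parts_pos (Multiset.mem_of_le tsub_le_self hx)
  have := Multiset.le_sum_of_mem hx
  have := p.sum_parts_sub_add h.le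
  omega

theorem ne_parts_of_le_of_ne {κ : Multiset ℕ} {p : n.Partition} (h : κ ≤ p.parts)
    (hne : κ ≠ p.parts) (p' : n.Partition) : κ ≠ p'.parts :=
  fun he => (p.sum_lt_of_lt_parts (lt_of_le_of_ne h hne)).ne (he ▸ p'.parts_sum)

theorem sum_filter_le_parts {M : Type*} [AddCommMonoid M] (κ : Multiset ℕ) (hκ : 0 ∉ κ)
    (hle : κ.sum ≤ n) (f : Multiset ℕ → M) :
    ∑ p : n.Partition with κ ≤ p.parts, f (p.parts - κ) =
      ∑ μ : (n - κ.sum).Partition, f μ.parts := by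
  refine Finset.sum_bij'
    (fun p hp => ⟨p.parts - κ, fun hi => p.parts_pos (Multiset.mem_of_le tsub_le_self hi),
      by have := p.sum_parts_sub_add (Finset.mem_filter.1 hp).2; omega⟩)
    (fun μ _ => ⟨μ.parts + κ, fun hi => ?_, by rw [Multiset.sum_add, μ.parts_sum]; omega⟩)
    (fun _ _ => Finset.mem_univ _)
    (fun μ _ => Finset.mem_filter.2 ⟨Finset.mem_univ _, le_add_self⟩)
    (fun p hp => Nat.Partition.ext (tsub_add_cancel_of_le (Finset.mem_filter.1 hp).2))
    (fun μ _ => Nat.Partition.ext (add_tsub_cancel_right _ _))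
    (fun _ _ => rfl)
  rcases Multiset.mem_add.1 hi with hi | hi
  · exact μ.parts_pos hi
  · exact Nat.pos_of_ne_zero fun h => hκ (h ▸ hi)

end Nat.Partition

theorem natCast_mul_count_mul_cycleWeight {m : Multiset ℕ} {j : ℕ} (hj : j ∈ m) (hj0 : j ≠ 0)
    (f : ℕ → ℝ) :
    (j * m.count j : ℝ) * cycleWeight f m = f j * cycleWeight f (m - {j}) := by
  have : (j : ℝ) ≠ 0 := Nat.cast_ne_zero.2 hj0
  have hsplit := count_powerset_mul_cycleWeight (Multiset.singleton_le.2 hj) f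
  rw [Multiset.count_powerset_eq_prod_choose m {j} (s := {j}) (by simp),
    Finset.prod_singleton, Multiset.count_singleton_self, Nat.choose_one_right,
    cycleWeight_singleton] at hsplit
  rw [mul_assoc, hsplit]
  field_simp

theorem sum_cycleWeight_partition_rec (f : ℕ → ℝ) (n : ℕ) :
    n * ∑ μ : n.Partition, cycleWeight f μ.parts =
      ∑ j ∈ Finset.Icc 1 n, f j * ∑ μ : (n - j).Partition, cycleWeight f μ.parts := by
  have hμ (μ : n.Partition) : (n : ℝ) * cycleWeight f μ.parts =
      ∑ j ∈ Finset.Icc 1 n with {j} ≤ μ.parts, f j * cycleWeight f (μ.parts - {j}) := by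
    rw [← congrArg (Nat.cast (R := ℝ)) μ.sum_Icc_count_mul, Finset.sum_filter, Nat.cast_sum,
      Finset.sum_mul]
    refine Finset.sum_congr rfl fun j hjn => ?_
    split_ifs with hj
    · rw [Nat.cast_mul, mul_comm (_ : ℝ) (j : ℝ)]
      exact natCast_mul_count_mul_cycleWeight (Multiset.singleton_le.1 hj)
        (Nat.one_le_iff_ne_zero.1 (Finset.mem_Icc.1 hjn).1) f
    · rw [Multiset.count_eq_zero.2 (mt Multiset.singleton_le.2 hj)]
      simp
  rw [Finset.mul_sum, Finset.sum_congr rfl fun μ _ => hμ μ,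
    Finset.sum_comm' (t' := Finset.Icc 1 n)
      (s' := fun j => Finset.univ.filter fun μ : n.Partition => {j} ≤ μ.parts)
      (by simp [and_comm])]
  refine Finset.sum_congr rfl fun j hj => ?_
  obtain ⟨hj1, hjn⟩ := Finset.mem_Icc.1 hj
  rw [← Finset.mul_sum,
    Nat.Partition.sum_filter_le_parts {j} (by simp; omega) (by simpa using hjn),
    Multiset.sum_singleton]

theorem sum_Icc_one_sub_pow_mul (u : ℝ) (N : ℕ) :
    ∑ j ∈ Finset.Icc 1 N, (1 - u ^ j) * (1 - u) = N * (1 - u) - (u - u ^ (N + 1)) := by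
  induction N with
  | zero => simp
  | succ N ih =>
    rw [Finset.sum_Icc_succ_top (by omega), ih]
    push_cast
    ring

theorem sum_cycleWeight_one_sub_pow (u : ℝ) {n : ℕ} (hn : 1 ≤ n) :
    ∑ μ : n.Partition, cycleWeight (fun p => 1 - u ^ p) μ.parts = 1 - u := by
  induction n using Nat.strong_induction_on with
  | _ n ih =>
    obtain ⟨N, rfl⟩ := Nat.exists_eq_add_of_le' hn
    have hrec := sum_cycleWeight_partition_rec (fun p => 1 - u ^ p) (N + 1)
    have hlower : ∀ j ∈ Finset.Icc 1 N, (1 - u ^ j) *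
        ∑ μ : (N + 1 - j).Partition, cycleWeight (fun p => 1 - u ^ p) μ.parts
          = (1 - u ^ j) * (1 - u) := fun j hj => by
      rw [ih _ (by grind) (by grind)]
    have hzero :
        ∑ μ : (N + 1 - (N + 1)).Partition, cycleWeight (fun p => 1 - u ^ p) μ.parts = 1 := by
      rw [Nat.sub_self, Fintype.sum_unique, Nat.Partition.partition_zero_parts, cycleWeight_zero]
    rw [Finset.sum_Icc_succ_top (by omega), Finset.sum_congr rfl hlower, sum_Icc_one_sub_pow_mul,
      hzero] at hrec
    have hN : ((N + 1 : ℕ) : ℝ) ≠ 0 := by positivity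
    refine mul_left_cancel₀ hN ?_
    rw [hrec]
    push_cast
    ring

section AuxiliaryVariablesChain

variable {q t : ℝ} {k : ℕ}

theorem piInf_eq_cycleWeight (t : ℝ) (m : Multiset ℕ) :
    piInf t m = t / (t - 1) * cycleWeight (fun p => 1 - t⁻¹ ^ p) m := by
  rw [piInf, cycleWeight, mul_assoc]

theorem piQT_eq_cycleWeight (q t : ℝ) (l : k.Partition) :
    piQT q t k l =
      poch q q k / poch t q k * cycleWeight (fun p => (1 - t ^ p) / (1 - q ^ p)) l.parts := by
  rw [piQT, cycleWeight, mul_assoc]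

theorem sum_piInf (ht0 : t ≠ 0) (ht1 : t ≠ 1) {n : ℕ} (hn : 1 ≤ n) :
    ∑ μ : n.Partition, piInf t μ.parts = 1 := by
  simp_rw [piInf_eq_cycleWeight, ← Finset.mul_sum, sum_cycleWeight_one_sub_pow t⁻¹ hn]
  have : t - 1 ≠ 0 := sub_ne_zero.2 ht1
  field_simp

theorem wKeep_eq (q : ℝ) (l : k.Partition) {κ : Multiset ℕ} (hκ : κ ≤ l.parts) :
    wKeep q k l.parts κ =
      (q ^ k - 1)⁻¹ * (l.parts.powerset.count κ * ((l.parts - κ).map (q ^ · - 1)).prod) := by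
  have hsub (m : Multiset ℕ) (hm : m ≤ l.parts) : m.toFinset ⊆ Finset.Icc 1 k :=
    (Multiset.toFinset_subset.2 (Multiset.subset_of_le hm)).trans l.toFinset_parts_subset_Icc
  rw [wKeep, Finset.prod_mul_distrib, Multiset.count_powerset_eq_prod_choose _ _ (hsub κ hκ),
    Multiset.prod_map_eq_prod_pow_count _ _ (hsub _ tsub_le_self)]
  push_cast
  simp only [Multiset.count_sub]

theorem sum_wKeep (hqk : q ^ k ≠ 1) (l : k.Partition) :
    ∑ κ ∈ l.parts.powerset.toFinset with κ ≠ l.parts, wKeep q k l.parts κ = 1 := by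
  have htotal :
      ∑ κ ∈ l.parts.powerset.toFinset, wKeep q k l.parts κ = (q ^ k - 1)⁻¹ * q ^ k := by
    rw [Finset.sum_congr rfl fun κ hκ =>
      wKeep_eq q l (Multiset.mem_powerset.1 (Multiset.mem_toFinset.1 hκ)), ← Finset.mul_sum]
    simp_rw [← nsmul_eq_mul, ← Finset.sum_multiset_map_count,
      Multiset.sum_map_prod_map_sub_powerset, sub_add_cancel, Multiset.prod_map_pow_eq_pow_sum,
      l.parts_sum]
  have hself : wKeep q k l.parts l.parts = (q ^ k - 1)⁻¹ := by simp [wKeep]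
  rw [Finset.filter_ne', Finset.sum_erase_eq_sub (by simp), htotal, hself]
  have : q ^ k - 1 ≠ 0 := sub_ne_zero.2 hqk
  field_simp

noncomputable def balanceWeight (q t : ℝ) (k : ℕ) (κ : Multiset ℕ) : ℝ :=
  poch q q k / poch t q k * (q ^ k - 1)⁻¹ * ((t - 1) / t) * t ^ (k - κ.sum) *
    cycleWeight (fun p => (1 - t ^ p) / (1 - q ^ p)) κ

theorem piQT_mul_wKeep (hq : 1 < q) (ht0 : t ≠ 0) (ht1 : t ≠ 1) (l : k.Partition)
    {κ : Multiset ℕ} (hκ : κ ≤ l.parts) :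
    piQT q t k l * wKeep q k l.parts κ = balanceWeight q t k κ * piInf t (l.parts - κ) := by
  have hfactor : ∀ p ∈ l.parts - κ,
      (1 - t ^ p) / (1 - q ^ p) * (q ^ p - 1) = t ^ p * (1 - t⁻¹ ^ p) := fun p hp => by
    have hp0 : p ≠ 0 := (l.parts_pos (Multiset.mem_of_le tsub_le_self hp)).ne'
    have : 1 - q ^ p ≠ 0 := (sub_neg.2 (one_lt_pow₀ hq hp0)).ne
    rw [inv_pow]
    field_simp
    ring
  have hrest : cycleWeight (fun p => (1 - t ^ p) / (1 - q ^ p)) (l.parts - κ) *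
      ((l.parts - κ).map (q ^ · - 1)).prod =
        t ^ (k - κ.sum) * cycleWeight (fun p => 1 - t⁻¹ ^ p) (l.parts - κ) := by
    rw [cycleWeight_mul_prod, cycleWeight, Multiset.map_congr rfl hfactor, ← cycleWeight,
      cycleWeight_pow_mul]
    have := l.sum_parts_sub_add hκ
    congr 2
    omega
  rw [piQT_eq_cycleWeight, wKeep_eq q l hκ, piInf_eq_cycleWeight, balanceWeight]
  have hsplit := count_powerset_mul_cycleWeight hκ (fun p => (1 - t ^ p) / (1 - q ^ p))
  set w := cycleWeight (fun p => (1 - t ^ p) / (1 - q ^ p))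
  set c := poch q q k / poch t q k * (q ^ k - 1)⁻¹
  calc _ = c * w κ * (w (l.parts - κ) * ((l.parts - κ).map (q ^ · - 1)).prod) := by
        linear_combination (c * ((l.parts - κ).map (q ^ · - 1)).prod) * hsplit
    _ = c * w κ * (t ^ (k - κ.sum) * cycleWeight (fun p => 1 - t⁻¹ ^ p) (l.parts - κ)) := by
        rw [hrest]
    _ = _ := by
        field_simp [sub_ne_zero.2 ht1]

theorem piQT_mul_auxM_comm (hq : 1 < q) (ht0 : t ≠ 0) (ht1 : t ≠ 1) (l ν : k.Partition) :
    piQT q t k l * auxM q t k l ν = piQT q t k ν * auxM q t k ν l := by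
  have hindex : l.parts.powerset.toFinset.filter (fun κ => κ ≤ ν.parts ∧ κ ≠ l.parts) =
      ν.parts.powerset.toFinset.filter (fun κ => κ ≤ l.parts ∧ κ ≠ ν.parts) := by
    ext κ
    simp only [Finset.mem_filter, Multiset.mem_toFinset, Multiset.mem_powerset]
    exact ⟨fun ⟨hl, hν, hne⟩ => ⟨hν, hl, Nat.Partition.ne_parts_of_le_of_ne hl hne ν⟩,
      fun ⟨hν, hl, hne⟩ => ⟨hl, hν, Nat.Partition.ne_parts_of_le_of_ne hν hne l⟩⟩
  rw [auxM, auxM, Finset.mul_sum, Finset.mul_sum, hindex]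
  refine Finset.sum_congr rfl fun κ hκ => ?_
  simp only [Finset.mem_filter, Multiset.mem_toFinset, Multiset.mem_powerset] at hκ
  rw [← mul_assoc, ← mul_assoc, piQT_mul_wKeep hq ht0 ht1 l hκ.2.1,
    piQT_mul_wKeep hq ht0 ht1 ν hκ.1]
  ring

theorem sum_auxM (hqk : q ^ k ≠ 1) (ht0 : t ≠ 0) (ht1 : t ≠ 1) (l : k.Partition) :
    ∑ ν, auxM q t k l ν = 1 := by
  simp only [auxM]
  rw [Finset.sum_comm' (t' := l.parts.powerset.toFinset.filter (· ≠ l.parts))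
    (s' := fun κ => Finset.univ.filter (κ ≤ ·.parts)) (by simp; tauto), ← sum_wKeep hqk l]
  refine Finset.sum_congr rfl fun κ hκ => ?_
  simp only [Finset.mem_filter, Multiset.mem_toFinset, Multiset.mem_powerset] at hκ
  have hlt := l.sum_lt_of_lt_parts (lt_of_le_of_ne hκ.1 hκ.2)
  rw [← Finset.mul_sum, Nat.Partition.sum_filter_le_parts κ
      (fun h => l.zero_notMem_parts (Multiset.mem_of_le hκ.1 h)) hlt.le (piInf t),
    sum_piInf ht0 ht1 (by omega), mul_one]

end AuxiliaryVariablesChain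

/-- Detailed balance and stationarity of `π_{q,t}` for the auxiliary variables chain. -/
theorem auxM_detailed_balance_and_stationary
    (q t : ℝ) (hq : 1 < q) (ht : 1 < t) (k : ℕ) (hk : 1 ≤ k) :
    (∀ l ν : Nat.Partition k,
      piQT q t k l * auxM q t k l ν = piQT q t k ν * auxM q t k ν l) ∧
    (∀ ν : Nat.Partition k,
      ∑ l : Nat.Partition k, piQT q t k l * auxM q t k l ν = piQT q t k ν) := by
  have ht0 : t ≠ 0 := (zero_lt_one.trans ht).ne'
  have hqk : q ^ k ≠ 1 := (one_lt_pow₀ hq (by omega)).ne'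
  have hbalance := piQT_mul_auxM_comm (k := k) hq ht0 ht.ne'
  refine ⟨hbalance, fun ν => ?_⟩
  simp_rw [hbalance _ ν, ← Finset.mul_sum, sum_auxM hqk ht0 ht.ne' ν, mul_one]
end

section
/- Let K be a field, t ∈ K, n ≥ 1, and let x_1,…,x_n be pairwise distinct elements of K. Then Σ_{i=1}^n ∏_{j≠i} (t·x_i − x_j)/(x_i − x_j) = 1 + t + t² + ⋯ + t^{n−1}. -/
open Finset

open Polynomial in
/-- `Σ_{i=1}^n ∏_{j≠i} (t x_i - x_j)/(x_i - x_j) = 1 + t + ⋯ + t^{n-1}` for pairwise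
distinct `x_1,…,x_n` in a field. -/
theorem sum_prod_ratio_eq_geom_sum {K : Type*} [Field K] (t : K) (n : ℕ) (hn : 1 ≤ n)
    (x : Fin n → K) (hx : Function.Injective x) :
    ∑ i : Fin n, ∏ j ∈ Finset.univ.erase i, (t * x i - x j) / (x i - x j) =
      ∑ m ∈ Finset.range n, t ^ m := by
  have hinj : Set.InjOn x (Finset.univ : Finset (Fin n)) := hx.injOn
  have hcard : #(Finset.univ : Finset (Fin n)) = n := by simp
  -- each term is the evaluation of a Lagrange basis polynomial at `t * x i`
  have hterm : ∀ i : Fin n, ∏ j ∈ Finset.univ.erase i, (t * x i - x j) / (x i - x j)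
      = (Lagrange.basis Finset.univ x i).eval (t * x i) := by
    intro i
    rw [Lagrange.basis, Polynomial.eval_prod]
    refine Finset.prod_congr rfl fun j hj => ?_
    rw [Lagrange.basisDivisor]
    simp [div_eq_inv_mul]
  have hdeg : ∀ i : Fin n, (Lagrange.basis Finset.univ x i).natDegree < n := by
    intro i
    rw [Lagrange.natDegree_basis hinj (mem_univ i), hcard]
    omega
  -- the key coefficient identity
  have hcoeff : ∀ k ∈ Finset.range n,
      ∑ i : Fin n, x i ^ k * (Lagrange.basis Finset.univ x i).coeff k = 1 := by
    intro k hk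
    rw [Finset.mem_range] at hk
    have hX : (Polynomial.X ^ k : K[X]) =
        Lagrange.interpolate Finset.univ x (fun i => x i ^ k) := by
      have := Lagrange.eq_interpolate (f := (Polynomial.X ^ k : K[X])) hinj
        (by rw [hcard, Polynomial.degree_X_pow]; exact_mod_cast hk)
      simpa using this
    have := congrArg (fun p => Polynomial.coeff p k) hX
    simp only [Polynomial.coeff_X_pow, if_pos rfl, Lagrange.interpolate_apply,
      Polynomial.finset_sum_coeff, Polynomial.coeff_C_mul] at this
    rw [← this]; simp
  calc ∑ i : Fin n, ∏ j ∈ Finset.univ.erase i, (t * x i - x j) / (x i - x j)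
      = ∑ i : Fin n, ∑ k ∈ Finset.range n,
          (Lagrange.basis Finset.univ x i).coeff k * (t * x i) ^ k := by
        refine Finset.sum_congr rfl fun i _ => ?_
        rw [hterm i, Polynomial.eval_eq_sum_range' (hdeg i)]
    _ = ∑ k ∈ Finset.range n, ∑ i : Fin n,
          (Lagrange.basis Finset.univ x i).coeff k * (t * x i) ^ k := by
        rw [Finset.sum_comm]
    _ = ∑ k ∈ Finset.range n,
          t ^ k * ∑ i : Fin n, x i ^ k * (Lagrange.basis Finset.univ x i).coeff k := by
        refine Finset.sum_congr rfl fun k _ => ?_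
        rw [Finset.mul_sum]
        refine Finset.sum_congr rfl fun i _ => ?_
        ring
    _ = ∑ m ∈ Finset.range n, t ^ m := by
        refine Finset.sum_congr rfl fun k hk => ?_
        rw [hcoeff k hk, mul_one]
end

section
/- Let n ≥ 1, α ∈ ℝ, and let λ = (λ_1,…,λ_s) be a partition with positive parts. Then, in the field of fractions of ℝ[x_1,…,x_n], D(α) p_λ = (1/2)·( α·Σ_{k=1}^s λ_k(λ_k−1) + Σ_{k=1}^s λ_k(2n−λ_k−1) )·p_λ + (α/2)·Σ_{(j,k): j≠k} λ_j·λ_k·p_{λ_j+λ_k}·∏_{m∉{j,k}} p_{λ_m} + (1/2)·Σ_{k=1}^s λ_k·(∏_{m≠k} p_{λ_m})·Σ_{m=1}^{λ_k−1} p_{λ_k−m}·p_m, where the middle sum runs over ordered pairs (j,k) with j ≠ k. -/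
open Finset MvPolynomial

variable (n : ℕ)

/-- The power sum `p_r = x_1^r + ⋯ + x_n^r`. -/
noncomputable def psumP (r : ℕ) : MvPolynomial (Fin n) ℝ :=
  ∑ i : Fin n, X i ^ r

/-- The operator `U_n f = (1/2) Σ_i x_i² ∂²f/∂x_i²`. -/
noncomputable def Un (f : MvPolynomial (Fin n) ℝ) : MvPolynomial (Fin n) ℝ :=
  C (1 / 2 : ℝ) * ∑ i : Fin n, X i ^ 2 * pderiv i (pderiv i f)

/-- The operator `V_n f = Σ_{i≠j} (x_i²/(x_i-x_j)) ∂f/∂x_i`, landing in the fraction field. -/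
noncomputable def Vn (f : MvPolynomial (Fin n) ℝ) : FractionRing (MvPolynomial (Fin n) ℝ) :=
  ∑ p ∈ (Finset.univ : Finset (Fin n)).offDiag,
    algebraMap (MvPolynomial (Fin n) ℝ) (FractionRing (MvPolynomial (Fin n) ℝ)) (X p.1 ^ 2) /
      algebraMap (MvPolynomial (Fin n) ℝ) (FractionRing (MvPolynomial (Fin n) ℝ))
        (X p.1 - X p.2) *
      algebraMap (MvPolynomial (Fin n) ℝ) (FractionRing (MvPolynomial (Fin n) ℝ))
        (pderiv p.1 f)

/-- The Stanley–Hanlon operator `D(α) = α U_n + V_n`. -/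
noncomputable def Dop (α : ℝ) (f : MvPolynomial (Fin n) ℝ) :
    FractionRing (MvPolynomial (Fin n) ℝ) :=
  algebraMap (MvPolynomial (Fin n) ℝ) (FractionRing (MvPolynomial (Fin n) ℝ)) (C α * Un n f) +
    Vn n f

/-- Real scalars inside the fraction field. -/
noncomputable def cK (c : ℝ) : FractionRing (MvPolynomial (Fin n) ℝ) :=
  algebraMap (MvPolynomial (Fin n) ℝ) (FractionRing (MvPolynomial (Fin n) ℝ)) (C c)

/-- The image of a polynomial in the fraction field. -/
noncomputable def φK (f : MvPolynomial (Fin n) ℝ) : FractionRing (MvPolynomial (Fin n) ℝ) :=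
  algebraMap (MvPolynomial (Fin n) ℝ) (FractionRing (MvPolynomial (Fin n) ℝ)) f

/-!
`U_n` and `V_n` are assembled from the derivations `∂/∂x_i`, so on a product of power sums they
obey Leibniz rules: `V_n` is of first order, while the second-order `U_n` also produces the cross
terms `Σ_i x_i² ∂_i p_a ∂_i p_b = a b p_{a+b}`. On a single power sum `U_n p_r = r(r-1)/2 · p_r`
and `V_n p_r = r Σ_{i≠j} x_i^{r+1}/(x_i - x_j)`. Symmetrizing in `(i, j)` replaces each pair by
`(x_i^{r+1} - x_j^{r+1})/(x_i - x_j) = Σ_{a=0}^{r} x_i^a x_j^{r-a}`, and summing over `i ≠ j` gives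
`Σ_{a=0}^{r} (p_a p_{r-a} - p_r) = (2n - r - 1) p_r + Σ_{m=1}^{r-1} p_{r-m} p_m`, since `p_0 = n`.
-/

namespace Finset

variable {ι M : Type*} [CommMonoid M]

@[to_additive]
theorem prod_offDiag_eq_prod_prod_erase [DecidableEq ι] (s : Finset ι) (f : ι × ι → M) :
    ∏ p ∈ s.offDiag, f p = ∏ i ∈ s, ∏ j ∈ s.erase i, f (i, j) :=
  prod_finset_product _ _ _ fun p => by simp only [mem_offDiag, mem_erase]; tauto

@[to_additive]
theorem prod_offDiag_swap (s : Finset ι) (f : ι × ι → M) :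
    ∏ p ∈ s.offDiag, f p.swap = ∏ p ∈ s.offDiag, f p :=
  prod_nbij' Prod.swap Prod.swap (by grind) (by grind) (by simp) (by simp) fun _ _ => rfl

end Finset

namespace Derivation

variable {ι R A M : Type*} [DecidableEq ι] [CommSemiring R] [CommSemiring A] [AddCommMonoid M]
  [Algebra R A] [Module A M] [Module R M]

theorem leibniz_prod (D : Derivation R A M) (s : Finset ι) (f : ι → A) :
    D (∏ i ∈ s, f i) = ∑ i ∈ s, (∏ j ∈ s.erase i, f j) • D (f i) := by
  induction s using Finset.induction_on with
  | empty => simp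
  | insert a s ha ih =>
    rw [prod_insert ha, leibniz, ih, sum_insert ha, erase_insert ha, smul_sum, add_comm]
    congr 1
    refine sum_congr rfl fun i hi => ?_
    rw [erase_insert_of_ne (ne_of_mem_of_not_mem hi ha).symm,
      prod_insert fun h => ha (mem_of_mem_erase h), mul_smul]

theorem apply_apply_prod (D : Derivation R A A) (s : Finset ι) (f : ι → A) :
    D (D (∏ i ∈ s, f i)) = ∑ i ∈ s, (∏ j ∈ s.erase i, f j) * D (D (f i)) +
      ∑ p ∈ s.offDiag, (∏ j ∈ s \ {p.1, p.2}, f j) * (D (f p.1) * D (f p.2)) := by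
  simp only [leibniz_prod, map_sum, leibniz, smul_eq_mul, sum_add_distrib, mul_sum,
    sum_offDiag_eq_sum_sum_erase]
  congr 1
  refine sum_congr rfl fun i _ => sum_congr rfl fun j _ => ?_
  rw [sdiff_insert, sdiff_singleton_eq_erase, erase_right_comm]
  ring

end Derivation

theorem two_mul_sum_offDiag_pow_succ_div_sub {F ι : Type*} [Field F] [DecidableEq ι]
    {s : Finset ι} {x : ι → F} (hx : Set.InjOn x s) (r : ℕ) :
    2 * ∑ p ∈ s.offDiag, x p.1 ^ (r + 1) / (x p.1 - x p.2) =
      ∑ p ∈ s.offDiag, ∑ a ∈ range (r + 1), x p.1 ^ a * x p.2 ^ (r - a) := by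
  rw [two_mul]
  nth_rewrite 2 [← sum_offDiag_swap]
  rw [← sum_add_distrib]
  refine sum_congr rfl fun p hp => ?_
  obtain ⟨hp₁, hp₂, hne⟩ := mem_offDiag.mp hp
  rw [Prod.fst_swap, Prod.snd_swap, ← neg_sub (x p.1), div_neg, ← sub_eq_add_neg, ← sub_div,
    ← geom₂_sum (hx.ne hp₁ hp₂ hne), Nat.add_sub_cancel]

section PowerSums

variable {n}

theorem pderiv_psumP (i : Fin n) (r : ℕ) :
    pderiv i (psumP n r) = (r : MvPolynomial (Fin n) ℝ) * X i ^ (r - 1) := by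
  simp [psumP, pderiv_X, Pi.single_apply]

theorem psumP_zero : psumP n 0 = (n : MvPolynomial (Fin n) ℝ) := by
  simp [psumP]

theorem sum_X_sq_mul_pderiv_pderiv_psumP (r : ℕ) :
    ∑ i, X i ^ 2 * pderiv i (pderiv i (psumP n r)) =
      C ((r : ℝ) * ((r : ℝ) - 1)) * psumP n r := by
  simp only [pderiv_psumP]
  rcases r with _ | _ | r
  · simp
  · simp
  · rw [psumP, mul_sum]
    refine sum_congr rfl fun i _ => ?_
    rw [← map_natCast C, pderiv_C_mul, pderiv_pow, pderiv_X_self]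
    simp only [map_mul, map_sub, map_natCast, map_one]
    push_cast
    ring

theorem sum_X_sq_mul_pderiv_psumP_mul_pderiv_psumP (a b : ℕ) :
    ∑ i, X i ^ 2 * (pderiv i (psumP n a) * pderiv i (psumP n b)) =
      C ((a : ℝ) * b) * psumP n (a + b) := by
  simp only [pderiv_psumP]
  rcases a with _ | a
  · simp
  rcases b with _ | b
  · simp
  rw [psumP, mul_sum]
  refine sum_congr rfl fun i _ => ?_
  simp only [map_mul, map_natCast]
  push_cast
  ring

theorem sum_offDiag_X_pow_mul_X_pow (a b : ℕ) :
    ∑ p ∈ (univ : Finset (Fin n)).offDiag, X p.1 ^ a * X p.2 ^ b =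
      psumP n a * psumP n b - psumP n (a + b) := by
  simp only [sum_offDiag_eq_sum_sum_erase, ← mul_sum, sum_erase_eq_sub (mem_univ _),
    ← pow_add, sum_sub_distrib, ← sum_mul, psumP]

theorem sum_offDiag_geom_sum₂_X {r : ℕ} (hr : 0 < r) :
    ∑ p ∈ (univ : Finset (Fin n)).offDiag, ∑ a ∈ range (r + 1), X p.1 ^ a * X p.2 ^ (r - a) =
      C (2 * (n : ℝ) - r - 1) * psumP n r + ∑ m ∈ Ico 1 r, psumP n (r - m) * psumP n m := by
  have hsplit : ∑ a ∈ range (r + 1), psumP n a * psumP n (r - a) =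
      psumP n 0 * psumP n r + ∑ m ∈ Ico 1 r, psumP n (r - m) * psumP n m +
        psumP n r * psumP n 0 := by
    rw [range_eq_Ico, sum_eq_sum_Ico_succ_bot (by omega), sum_Ico_succ_top hr, Nat.sub_self,
      Nat.sub_zero, add_assoc]
    exact congrArg₂ _ rfl (congrArg₂ _ (sum_congr rfl fun _ _ => mul_comm _ _) rfl)
  rw [sum_comm]
  simp only [sum_offDiag_X_pow_mul_X_pow]
  rw [sum_congr rfl fun a ha => by rw [Nat.add_sub_cancel' (mem_range_succ_iff.mp ha)],
    sum_sub_distrib, hsplit, sum_const, card_range, psumP_zero]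
  simp only [map_sub, map_mul, map_ofNat, map_natCast, map_one, nsmul_eq_mul, Nat.cast_add,
    Nat.cast_one]
  ring

end PowerSums

section Un

variable {n} {ι : Type*} [DecidableEq ι]

theorem Un_prod (s : Finset ι) (f : ι → MvPolynomial (Fin n) ℝ) :
    Un n (∏ k ∈ s, f k) = ∑ k ∈ s, (∏ l ∈ s.erase k, f l) * Un n (f k) +
      C (1 / 2) * ∑ p ∈ s.offDiag, (∏ l ∈ s \ {p.1, p.2}, f l) *
        ∑ i, X i ^ 2 * (pderiv i (f p.1) * pderiv i (f p.2)) := by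
  simp only [Un, Derivation.apply_apply_prod, mul_add, sum_add_distrib, mul_sum]
  congr 1 <;> rw [sum_comm] <;> exact sum_congr rfl fun _ _ => sum_congr rfl fun _ _ => by ring

theorem Un_psumP (r : ℕ) :
    Un n (psumP n r) = C (1 / 2 * ((r : ℝ) * ((r : ℝ) - 1))) * psumP n r := by
  rw [Un, sum_X_sq_mul_pderiv_pderiv_psumP, ← mul_assoc, ← map_mul]

theorem Un_prod_psumP (s : Finset ι) (lam : ι → ℕ) :
    Un n (∏ k ∈ s, psumP n (lam k)) =
      C (1 / 2 * ∑ k ∈ s, (lam k : ℝ) * ((lam k : ℝ) - 1)) * ∏ k ∈ s, psumP n (lam k) +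
        C (1 / 2) * ∑ p ∈ s.offDiag, C ((lam p.1 : ℝ) * lam p.2) *
          (psumP n (lam p.1 + lam p.2) * ∏ l ∈ s \ {p.1, p.2}, psumP n (lam l)) := by
  rw [Un_prod]
  simp only [Un_psumP, sum_X_sq_mul_pderiv_psumP_mul_pderiv_psumP]
  congr 1
  · rw [mul_sum, map_sum, sum_mul]
    refine sum_congr rfl fun k hk => ?_
    rw [← mul_prod_erase s _ hk]
    ring
  · congr 1
    exact sum_congr rfl fun _ _ => by ring

end Un

section Vn

variable {n} {ι : Type*} [DecidableEq ι]

theorem algebraMap_fractionRing_C (c : ℝ) :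
    algebraMap (MvPolynomial (Fin n) ℝ) (FractionRing (MvPolynomial (Fin n) ℝ)) (C c) =
      algebraMap ℝ _ c :=
  (IsScalarTower.algebraMap_apply _ _ _ c).symm

theorem Vn_prod (s : Finset ι) (f : ι → MvPolynomial (Fin n) ℝ) :
    Vn n (∏ k ∈ s, f k) = ∑ k ∈ s, φK n (∏ l ∈ s.erase k, f l) * Vn n (f k) := by
  simp only [Vn, φK, Derivation.leibniz_prod, smul_eq_mul, map_sum, map_mul, mul_sum]
  rw [sum_comm]
  exact sum_congr rfl fun _ _ => sum_congr rfl fun _ _ => by ring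

theorem Vn_psumP (r : ℕ) :
    Vn n (psumP n r) = cK n ((r : ℝ) / 2) *
      φK n (C (2 * (n : ℝ) - r - 1) * psumP n r +
        ∑ m ∈ Ico 1 r, psumP n (r - m) * psumP n m) := by
  rcases Nat.eq_zero_or_pos r with rfl | hr
  · simp [Vn, cK, pderiv_psumP]
  have hinj : Set.InjOn (fun i : Fin n => algebraMap (MvPolynomial (Fin n) ℝ)
      (FractionRing (MvPolynomial (Fin n) ℝ)) (X i)) (univ : Finset (Fin n)) :=
    ((IsFractionRing.injective _ _).comp X_injective).injOn
  simp only [← sum_offDiag_geom_sum₂_X hr, φK, map_sum, map_mul, map_pow]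
  rw [← two_mul_sum_offDiag_pow_succ_div_sub hinj r, cK, algebraMap_fractionRing_C, map_div₀,
    map_natCast, map_ofNat, mul_sum, mul_sum]
  obtain ⟨k, rfl⟩ : ∃ k, r = k + 1 := ⟨r - 1, by omega⟩
  refine sum_congr rfl fun p _ => ?_
  simp only [pderiv_psumP, map_mul, map_natCast, map_pow, map_sub, Nat.add_sub_cancel]
  ring

theorem Vn_prod_psumP (s : Finset ι) (lam : ι → ℕ) :
    Vn n (∏ k ∈ s, psumP n (lam k)) =
      cK n (1 / 2 * ∑ k ∈ s, (lam k : ℝ) * (2 * (n : ℝ) - lam k - 1)) *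
          φK n (∏ k ∈ s, psumP n (lam k)) +
        cK n (1 / 2) * ∑ k ∈ s, cK n (lam k) *
          φK n ((∏ l ∈ s.erase k, psumP n (lam l)) *
            ∑ m ∈ Ico 1 (lam k), psumP n (lam k - m) * psumP n m) := by
  simp only [Vn_prod, Vn_psumP, cK, φK, algebraMap_fractionRing_C, map_add, map_mul, map_sum,
    mul_sum (s := s), sum_mul (s := s), ← sum_add_distrib]
  refine sum_congr rfl fun k hk => ?_
  rw [← mul_prod_erase s _ hk]
  simp only [map_mul, map_div₀, map_ofNat, map_one]
  ring

end Vn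

theorem Dop_powerSum (α : ℝ) (s : ℕ) (lam : Fin s → ℕ) :
    Dop n α (∏ m : Fin s, psumP n (lam m)) =
      cK n ((1 / 2) * (α * ∑ m : Fin s, ((lam m : ℝ) * ((lam m : ℝ) - 1)) +
            ∑ m : Fin s, (lam m : ℝ) * (2 * (n : ℝ) - (lam m : ℝ) - 1))) *
          φK n (∏ m : Fin s, psumP n (lam m)) +
        cK n (α / 2) * ∑ p ∈ (Finset.univ : Finset (Fin s)).offDiag,
          cK n ((lam p.1 : ℝ) * (lam p.2 : ℝ)) *
            φK n (psumP n (lam p.1 + lam p.2) *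
              ∏ m ∈ Finset.univ \ {p.1, p.2}, psumP n (lam m)) +
        cK n (1 / 2) * ∑ j : Fin s,
          cK n (lam j : ℝ) *
            φK n ((∏ m ∈ Finset.univ.erase j, psumP n (lam m)) *
              ∑ m ∈ Finset.Ico 1 (lam j), psumP n (lam j - m) * psumP n m) := by
  rw [Dop, Un_prod_psumP, Vn_prod_psumP]
  simp only [cK, φK, algebraMap_fractionRing_C, map_add, map_mul, map_sum, map_div₀, map_ofNat,
    map_one]
  ring
end

section
/- Let q, t > 1 be real numbers and k ≥ 1 an integer. For a partition λ of k define β_λ = (t/(q^k−1))·Σ_{j=1}^{ℓ(λ)} (q^{λ_j}−1)·t^{−j}. If λ and μ are partitions of k with λ ≥ μ in the dominance order, i.e. λ_1 + ⋯ + λ_m ≥ μ_1 + ⋯ + μ_m for every m ≥ 1 (parts beyond the length of a partition taken to be 0), then β_λ ≥ β_μ. -/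
open Finset

/-- The `j`-th largest part of a partition (`j` counted from `0`), or `0` if `j` is too big. -/
def partAt {k : ℕ} (l : Nat.Partition k) (j : ℕ) : ℕ :=
  ((l.parts.sort (· ≤ ·)).reverse.getD j 0)

/-- The eigenvalue `β_λ = (t/(q^k-1)) Σ_{j=1}^{ℓ(λ)} (q^{λ_j}-1) t^{-j}`. -/
noncomputable def betaEig (q t : ℝ) (k : ℕ) (l : Nat.Partition k) : ℝ :=
  (t / (q ^ k - 1)) * ∑ j ∈ Finset.range (Multiset.card l.parts),
    (q ^ partAt l j - 1) * t⁻¹ ^ (j + 1)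

lemma partAt_eq_zero {k : ℕ} (l : Nat.Partition k) {j : ℕ}
    (h : Multiset.card l.parts ≤ j) : partAt l j = 0 := by
  apply List.getD_eq_default
  simpa using h

lemma partAt_antitone {k : ℕ} (l : Nat.Partition k) {i j : ℕ} (h : i ≤ j) :
    partAt l j ≤ partAt l i := by
  unfold partAt
  set R := (l.parts.sort (· ≤ ·)).reverse with hR
  have hpw : R.Pairwise (fun a b => b ≤ a) := by
    rw [hR, List.pairwise_reverse]
    exact Multiset.pairwise_sort _ _
  rcases le_or_gt R.length j with hj | hj
  · rw [List.getD_eq_default _ _ hj]; exact Nat.zero_le _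
  · have hi : i < R.length := lt_of_le_of_lt h hj
    rw [List.getD_eq_getElem _ _ hj, List.getD_eq_getElem _ _ hi]
    rcases eq_or_lt_of_le h with rfl | hlt
    · exact le_refl _
    · exact List.pairwise_iff_getElem.mp hpw i j hi hj hlt

lemma list_sum_getD (L : List ℕ) : ∑ j ∈ range L.length, L.getD j 0 = L.sum := by
  induction L with
  | nil => simp
  | cons x xs ih =>
    rw [List.length_cons, Finset.sum_range_succ']
    simp only [List.getD_cons_succ, List.getD_cons_zero, ih, List.sum_cons]
    omega

lemma sum_partAt {k : ℕ} (l : Nat.Partition k) :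
    ∑ j ∈ range (Multiset.card l.parts), partAt l j = k := by
  unfold partAt
  have h1 : Multiset.card l.parts = (l.parts.sort (· ≤ ·)).reverse.length := by simp
  rw [h1, list_sum_getD, List.sum_reverse]
  have h2 : ((l.parts.sort (· ≤ ·) : List ℕ) : Multiset ℕ).sum = l.parts.sum := by
    rw [Multiset.sort_eq]
  rw [Multiset.sum_coe] at h2
  rw [h2, l.parts_sum]

/-- Tangent-line inequality for the convex function `x ↦ q^x`. -/
lemma tangent_le {q : ℝ} (hq : 1 ≤ q) (a b : ℕ) :
    q ^ b + (q - 1) * q ^ b * ((a : ℝ) - b) ≤ q ^ a := by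
  have hq0 : (0:ℝ) < q := lt_of_lt_of_le one_pos hq
  rcases le_or_gt b a with hba | hab
  · obtain ⟨n, rfl⟩ := Nat.exists_eq_add_of_le hba
    have hber : 1 + (n:ℝ) * (q - 1) ≤ q ^ n := by
      have := one_add_mul_le_pow (a := q - 1) (by linarith) n
      simpa using this
    have hpb : (0:ℝ) < q ^ b := pow_pos hq0 b
    have : q ^ b * (1 + (n:ℝ) * (q - 1)) ≤ q ^ b * q ^ n :=
      mul_le_mul_of_nonneg_left hber (le_of_lt hpb)
    rw [← pow_add] at this
    push_cast
    nlinarith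
  · obtain ⟨n, rfl⟩ := Nat.exists_eq_add_of_lt hab
    have hber : 1 + ((n+1:ℕ):ℝ) * (q⁻¹ - 1) ≤ q⁻¹ ^ (n+1) := by
      have hinv : (0:ℝ) < q⁻¹ := inv_pos.mpr hq0
      have := one_add_mul_le_pow (a := q⁻¹ - 1) (by linarith) (n+1)
      simpa using this
    have hpa : (0:ℝ) < q ^ a := pow_pos hq0 a
    have hid : q ^ (a + (n+1)) * q⁻¹ ^ (n+1) = q ^ a := by
      rw [pow_add, mul_assoc, ← mul_pow, mul_inv_cancel₀ (ne_of_gt hq0), one_pow, mul_one]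
    have hpab : (0:ℝ) < q ^ (a + (n+1)) := pow_pos hq0 _
    have h2 : q ^ (a + (n+1)) * (1 + ((n+1:ℕ):ℝ) * (q⁻¹ - 1)) ≤ q ^ a := by
      calc q ^ (a + (n+1)) * (1 + ((n+1:ℕ):ℝ) * (q⁻¹ - 1))
          ≤ q ^ (a + (n+1)) * q⁻¹ ^ (n+1) := mul_le_mul_of_nonneg_left hber (le_of_lt hpab)
        _ = q ^ a := hid
    -- need : q^(a+n+1) + (q-1)*q^(a+n+1)*((a:ℝ) - (a+n+1)) ≤ q^a
    have hqinv : q * q⁻¹ = 1 := mul_inv_cancel₀ (ne_of_gt hq0)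
    have hkey : 1 - ((n+1:ℕ):ℝ) * (q - 1) ≤ 1 + ((n+1:ℕ):ℝ) * (q⁻¹ - 1) := by
      have h3 : 1 - q⁻¹ ≤ q - 1 := by
        have : q⁻¹ * q = 1 := inv_mul_cancel₀ (ne_of_gt hq0)
        nlinarith [inv_pos.mpr hq0]
      have hn : (0:ℝ) ≤ ((n+1:ℕ):ℝ) := Nat.cast_nonneg _
      nlinarith
    have h4 : q ^ (a + (n+1)) * (1 - ((n+1:ℕ):ℝ) * (q - 1)) ≤ q ^ a :=
      le_trans (mul_le_mul_of_nonneg_left hkey (le_of_lt hpab)) h2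
    rw [show a + (n+1) = a + n + 1 by omega] at h4
    push_cast at h4 ⊢
    nlinarith [h4]

/-- Abel-summation positivity: if `g` is a nonincreasing nonnegative sequence and the
partial sums of `d` are nonnegative, then `g N * (∑ d) ≤ ∑ g * d`. -/
lemma abel_ge (g d : ℕ → ℝ) (hg0 : ∀ j, 0 ≤ g j) (hgm : ∀ j, g (j+1) ≤ g j)
    (hD : ∀ m, 0 ≤ ∑ j ∈ range m, d j) :
    ∀ N, g N * (∑ j ∈ range N, d j) ≤ ∑ j ∈ range N, g j * d j := by
  intro N
  induction N with
  | zero => simp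
  | succ n ih =>
    rw [Finset.sum_range_succ, Finset.sum_range_succ]
    have h1 : g (n+1) * (∑ j ∈ range n, d j + d n) ≤ g n * (∑ j ∈ range n, d j + d n) := by
      rcases le_or_gt 0 (∑ j ∈ range n, d j + d n) with hpos | hneg
      · exact mul_le_mul_of_nonneg_right (hgm n) hpos
      · exfalso
        have := hD (n+1)
        rw [Finset.sum_range_succ] at this
        linarith
    have h2 : g n * (∑ j ∈ range n, d j + d n) ≤ ∑ j ∈ range n, g j * d j + g n * d n := by
      have := ih
      nlinarith [hD n]
    linarith

/-- Key inequality about sequences. -/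
lemma key_ineq (q t : ℝ) (hq : 1 < q) (ht : 1 < t) (N : ℕ) (a b : ℕ → ℕ)
    (hb : ∀ i j, i ≤ j → b j ≤ b i)
    (hdom : ∀ m, ∑ j ∈ range m, b j ≤ ∑ j ∈ range m, a j)
    (heq : ∑ j ∈ range N, (b j : ℝ) = ∑ j ∈ range N, (a j : ℝ)) :
    ∑ j ∈ range N, (q ^ b j - 1) * t⁻¹ ^ (j+1) ≤
      ∑ j ∈ range N, (q ^ a j - 1) * t⁻¹ ^ (j+1) := by
  have ht0 : (0:ℝ) < t := lt_trans one_pos ht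
  have htinv : (0:ℝ) < t⁻¹ := inv_pos.mpr ht0
  have htinv1 : t⁻¹ ≤ 1 := by
    rw [inv_le_one_iff₀]; right; exact le_of_lt ht
  have hq0 : (0:ℝ) < q := lt_trans one_pos hq
  set g : ℕ → ℝ := fun j => (q - 1) * q ^ b j * t⁻¹ ^ (j+1) with hgdef
  set d : ℕ → ℝ := fun j => (a j : ℝ) - (b j : ℝ) with hddef
  have hg0 : ∀ j, 0 ≤ g j := fun j => by
    apply mul_nonneg (mul_nonneg (by linarith) (le_of_lt (pow_pos hq0 _)))
      (le_of_lt (pow_pos htinv _))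
  have hgm : ∀ j, g (j+1) ≤ g j := by
    intro j
    apply mul_le_mul (mul_le_mul_of_nonneg_left
        (pow_le_pow_right₀ (le_of_lt hq) (hb j (j+1) (Nat.le_succ j))) (by linarith))
      (pow_le_pow_of_le_one (le_of_lt htinv) htinv1 (by omega))
      (le_of_lt (pow_pos htinv _))
      (mul_nonneg (by linarith) (le_of_lt (pow_pos hq0 _)))
  have hD : ∀ m, 0 ≤ ∑ j ∈ range m, d j := by
    intro m
    have : ∑ j ∈ range m, d j = ((∑ j ∈ range m, a j : ℕ) : ℝ) -
        ((∑ j ∈ range m, b j : ℕ) : ℝ) := by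
      rw [hddef]; push_cast; rw [Finset.sum_sub_distrib]
    rw [this]
    have := hdom m
    have : ((∑ j ∈ range m, b j : ℕ) : ℝ) ≤ ((∑ j ∈ range m, a j : ℕ) : ℝ) := by
      exact_mod_cast this
    linarith
  have hDN : ∑ j ∈ range N, d j = 0 := by
    rw [hddef]
    rw [Finset.sum_sub_distrib, heq]
    ring
  have habel := abel_ge g d hg0 hgm hD N
  rw [hDN, mul_zero] at habel
  have hterm : ∀ j ∈ range N, g j * d j ≤
      (q ^ a j - 1) * t⁻¹ ^ (j+1) - (q ^ b j - 1) * t⁻¹ ^ (j+1) := by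
    intro j _
    have htan := tangent_le (le_of_lt hq) (a j) (b j)
    have hw : (0:ℝ) ≤ t⁻¹ ^ (j+1) := le_of_lt (pow_pos htinv _)
    have : (q - 1) * q ^ b j * ((a j : ℝ) - b j) ≤ q ^ a j - q ^ b j := by linarith
    have := mul_le_mul_of_nonneg_right this hw
    calc g j * d j = ((q - 1) * q ^ b j * ((a j : ℝ) - b j)) * t⁻¹ ^ (j+1) := by
          rw [hgdef, hddef]; ring
      _ ≤ (q ^ a j - q ^ b j) * t⁻¹ ^ (j+1) := this
      _ = (q ^ a j - 1) * t⁻¹ ^ (j+1) - (q ^ b j - 1) * t⁻¹ ^ (j+1) := by ring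
  have := Finset.sum_le_sum hterm
  rw [Finset.sum_sub_distrib] at this
  linarith

/-- The eigenvalues `β_λ` are monotone for the dominance order on partitions of `k`. -/
theorem betaEig_monotone_dominance (q t : ℝ) (hq : 1 < q) (ht : 1 < t)
    (k : ℕ) (hk : 1 ≤ k) (lam μ : Nat.Partition k)
    (hdom : ∀ m : ℕ, ∑ j ∈ Finset.range m, partAt μ j ≤ ∑ j ∈ Finset.range m, partAt lam j) :
    betaEig q t k μ ≤ betaEig q t k lam := by
  have hq0 : (0:ℝ) < q := lt_trans one_pos hq
  have ht0 : (0:ℝ) < t := lt_trans one_pos ht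
  set N := max (Multiset.card lam.parts) (Multiset.card μ.parts) with hN
  have hsumN : ∀ (l : Nat.Partition k), Multiset.card l.parts ≤ N →
      ∑ j ∈ range (Multiset.card l.parts), (q ^ partAt l j - 1) * t⁻¹ ^ (j + 1)
        = ∑ j ∈ range N, (q ^ partAt l j - 1) * t⁻¹ ^ (j + 1) := by
    intro l hl
    apply Finset.sum_subset (Finset.range_subset_range.mpr hl)
    intro x _ hx
    rw [Finset.mem_range, not_lt] at hx
    rw [partAt_eq_zero l hx]
    simp
  have hsumk : ∀ (l : Nat.Partition k), Multiset.card l.parts ≤ N →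
      ∑ j ∈ range N, (partAt l j : ℝ) = (k : ℝ) := by
    intro l hl
    have h1 : ∑ j ∈ range N, partAt l j = k := by
      have h0 : ∑ j ∈ range (Multiset.card l.parts), partAt l j
          = ∑ j ∈ range N, partAt l j := by
        apply Finset.sum_subset (Finset.range_subset_range.mpr hl)
        intro x _ hx
        rw [Finset.mem_range, not_lt] at hx
        exact partAt_eq_zero l hx
      rw [← h0]
      exact sum_partAt l
    exact_mod_cast congrArg (Nat.cast : ℕ → ℝ) h1
  have hlN : Multiset.card lam.parts ≤ N := le_max_left _ _
  have hmN : Multiset.card μ.parts ≤ N := le_max_right _ _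
  unfold betaEig
  rw [hsumN lam hlN, hsumN μ hmN]
  have hfac : 0 ≤ t / (q ^ k - 1) := by
    apply div_nonneg (le_of_lt ht0)
    have : (1:ℝ) < q ^ k := one_lt_pow₀ hq (by omega)
    linarith
  apply mul_le_mul_of_nonneg_left _ hfac
  exact key_ineq q t hq ht N (partAt lam) (partAt μ)
    (fun i j h => partAt_antitone μ h) hdom
    (by rw [hsumk lam hlN, hsumk μ hmN])
end

section
/- Let t > 1 be a real number and r ≥ 1 an integer. Then Σ_{μ⊢r} (1/z_μ)·∏_{j=1}^{ℓ(μ)} (1 − t^{−μ_j}) = 1 − t^{−1}, where the sum is over all partitions μ of r. Equivalently, π_{∞,t} is a probability distribution on the partitions of r: Σ_{μ⊢r} π_{∞,t}(μ) = 1. -/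
/-!
Put `w(μ) = z_μ⁻¹ ∏ⱼ f(μⱼ)` and `S_r = ∑_{μ ⊢ r} w(μ)`, so that
`∑ S_r xʳ = exp (∑ f(k) xᵏ / k)`.
Removing one part `k` from a partition of `r` is a bijection onto the partitions of `r - k` and
divides `z_μ` by `k · a_k(μ)`; since `r = ∑ₖ k · a_k(μ)`, this gives Newton's recurrence
`r S_r = ∑_{k=1}^r f(k) S_{r-k}` with `S_0 = 1`, which determines `S`. For `f(k) = 1 - qᵏ`, the
sequence `1, 1 - q, 1 - q, …` (the coefficients of `(1 - q x) / (1 - x)`) satisfies the same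
recurrence, hence `S_r = 1 - q` for `r ≥ 1`; take `q = t⁻¹`.
-/

open Finset

lemma zWeight_cons (k : ℕ) (m : Multiset ℕ) :
    zWeight (k ::ₘ m) = k * (m.count k + 1) * zWeight m := by
  have hrest : ∀ i ∈ m.toFinset.erase k,
      i ^ (k ::ₘ m).count i * ((k ::ₘ m).count i).factorial
        = i ^ m.count i * (m.count i).factorial := fun i hi => by
    rw [Multiset.count_cons_of_ne (ne_of_mem_erase hi)]
  unfold zWeight
  rw [Multiset.toFinset_cons, ← mul_prod_erase _ _ (mem_insert_self k _),
    erase_insert_eq_erase, prod_congr rfl hrest, Multiset.count_cons_self]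
  by_cases hk : k ∈ m
  · rw [← mul_prod_erase _ _ (Multiset.mem_toFinset.2 hk), pow_succ,
      Nat.factorial_succ]
    ring
  · rw [erase_eq_of_notMem (by simpa using hk), Multiset.count_eq_zero.2 hk]
    simp

lemma zWeight_pos {m : Multiset ℕ} (hm : ∀ i ∈ m, 0 < i) : 0 < zWeight m :=
  prod_pos fun i hi => by
    have := hm i (Multiset.mem_toFinset.1 hi)
    positivity

section

variable {K : Type*} [Field K]

noncomputable def cycleIndexSum (f : ℕ → K) (n : ℕ) : K :=
  ∑ μ : n.Partition, (zWeight μ.parts : K)⁻¹ * (μ.parts.map f).prod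

lemma cycleIndexSum_zero (f : ℕ → K) : cycleIndexSum f 0 = 1 := by
  simp [cycleIndexSum, zWeight]

lemma sum_count_mul_cycleIndexTerm [CharZero K] (f : ℕ → K) {n k : ℕ} (hk : 1 ≤ k)
    (hkn : k ≤ n) :
    ∑ μ : n.Partition, (μ.parts.count k * k : K) *
        ((zWeight μ.parts : K)⁻¹ * (μ.parts.map f).prod)
      = f k * cycleIndexSum f (n - k) := by
  set g : Multiset ℕ → K := fun m =>
    (m.count k * k : K) * ((zWeight m : K)⁻¹ * (m.map f).prod)
  have hsupp : ∀ μ ∈ (univ : Finset n.Partition), g μ.parts ≠ 0 → k ∈ μ.parts := by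
    intro μ _ hμ
    by_contra hk'
    exact hμ (by simp [g, Multiset.count_eq_zero.2 hk'])
  change ∑ μ : n.Partition, g μ.parts = _
  rw [← sum_filter_of_ne hsupp,
    sum_subtype (p := fun μ : n.Partition => k ∈ μ.parts) _ (by simp),
    ← (Nat.Partition.partitionWithPartEquiv hk hkn).symm.sum_comp, cycleIndexSum, mul_sum]
  refine sum_congr rfl fun ν _ => ?_
  have hz : (zWeight ν.parts : K) ≠ 0 := by
    exact_mod_cast (zWeight_pos fun _ => ν.parts_pos).ne'
  have hk0 : (k : K) ≠ 0 := by exact_mod_cast (by omega : k ≠ 0)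
  simp only [g, Nat.Partition.partitionWithPartEquiv_symm_apply_parts, Multiset.count_cons_self,
    zWeight_cons, Multiset.map_cons, Multiset.prod_cons]
  push_cast
  field_simp

def NewtonRecurrence (f a : ℕ → K) : Prop :=
  ∀ r : ℕ, (r : K) * a r = ∑ k ∈ Icc 1 r, f k * a (r - k)

lemma newtonRecurrence_cycleIndexSum [CharZero K] (f : ℕ → K) :
    NewtonRecurrence f (cycleIndexSum f) := by
  intro r
  have hr : ∀ μ : r.Partition, (r : K) = ∑ k ∈ Icc 1 r, (μ.parts.count k * k : K) := by
    intro μ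
    have hsub : μ.parts.toFinset ⊆ Icc 1 r := fun p hp => by
      rw [Multiset.mem_toFinset] at hp
      exact mem_Icc.2 ⟨μ.parts_pos hp, Nat.Partition.le_of_mem_parts hp⟩
    have h := congrArg (Nat.cast (R := K)) (sum_multiset_count_of_subset _ _ hsub)
    rw [μ.parts_sum] at h
    push_cast [smul_eq_mul] at h
    exact h
  calc (r : K) * cycleIndexSum f r
      = ∑ k ∈ Icc 1 r, ∑ μ : r.Partition, (μ.parts.count k * k : K) *
          ((zWeight μ.parts : K)⁻¹ * (μ.parts.map f).prod) := by
        rw [cycleIndexSum, mul_sum, sum_comm]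
        refine sum_congr rfl fun μ _ => ?_
        rw [hr μ, sum_mul]
    _ = _ := sum_congr rfl fun k hk =>
        sum_count_mul_cycleIndexTerm f (mem_Icc.1 hk).1 (mem_Icc.1 hk).2

lemma NewtonRecurrence.eq_of_zero [CharZero K] {f a b : ℕ → K} (ha : NewtonRecurrence f a)
    (hb : NewtonRecurrence f b) (h0 : a 0 = b 0) : a = b := by
  funext r
  induction r using Nat.strong_induction_on with
  | _ r ih =>
    rcases Nat.eq_zero_or_pos r with rfl | hr
    · exact h0
    · have hr0 : (r : K) ≠ 0 := by exact_mod_cast hr.ne'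
      refine mul_left_cancel₀ hr0 ?_
      rw [ha r, hb r]
      exact sum_congr rfl fun k hk => by rw [ih (r - k) (by grind)]

lemma sum_Icc_one_sub_pow_mul_s19 (q : K) (n : ℕ) :
    (∑ k ∈ Icc 1 n, (1 - q ^ k)) * (1 - q) = n * (1 - q) - q * (1 - q ^ n) := by
  induction n with
  | zero => simp
  | succ n ih =>
    rw [sum_Icc_succ_top (by omega), add_mul, ih]
    push_cast
    ring

lemma newtonRecurrence_one_sub_pow (q : K) :
    NewtonRecurrence (fun k => 1 - q ^ k) (fun r => if r = 0 then 1 else 1 - q) := by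
  rintro (_ | n)
  · simp
  · have hlow : ∀ k ∈ Icc 1 n, (1 - q ^ k) * (if n + 1 - k = 0 then 1 else 1 - q)
        = (1 - q ^ k) * (1 - q) := fun k hk => by
      rw [if_neg (by grind)]
    rw [sum_Icc_succ_top (by omega), sum_congr rfl hlow, ← sum_mul, sum_Icc_one_sub_pow_mul_s19]
    simp only [Nat.add_one_ne_zero, if_false, Nat.sub_self, if_true]
    push_cast
    ring

lemma cycleIndexSum_one_sub_pow [CharZero K] (q : K) {r : ℕ} (hr : r ≠ 0) :
    cycleIndexSum (fun k => 1 - q ^ k) r = 1 - q := by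
  have h := (newtonRecurrence_cycleIndexSum _).eq_of_zero (newtonRecurrence_one_sub_pow q)
    (by simp [cycleIndexSum_zero])
  simpa [hr] using congrFun h r

end

/-- `Σ_{μ⊢r} (1/z_μ) ∏_j (1-t^{-μ_j}) = 1 - t⁻¹`; equivalently `π_{∞,t}` is a
probability distribution on the partitions of `r`. -/
theorem piInf_normalized (t : ℝ) (ht : 1 < t) (r : ℕ) (hr : 1 ≤ r) :
    (∑ μ : Nat.Partition r, ((zWeight μ.parts : ℝ))⁻¹ *
        (μ.parts.map (fun p => 1 - t⁻¹ ^ p)).prod) = 1 - t⁻¹ ∧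
      (∑ μ : Nat.Partition r, piInf t μ.parts) = 1 := by
  have hsum := cycleIndexSum_one_sub_pow t⁻¹ (Nat.one_le_iff_ne_zero.1 hr)
  refine ⟨hsum, ?_⟩
  have ht0 : t ≠ 0 := by positivity
  have ht1 : t - 1 ≠ 0 := sub_ne_zero.2 ht.ne'
  calc ∑ μ : r.Partition, piInf t μ.parts
      = t / (t - 1) * cycleIndexSum (fun k => 1 - t⁻¹ ^ k) r := by
        simp only [piInf, cycleIndexSum, mul_sum, mul_assoc]
    _ = 1 := by
        rw [hsum]
        field_simp
end
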